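/- Any simple rectifiable curve Γ ⊆ ℝⁿ of length L admits exactly two normalized constant-speed parametrizations: injective continuous maps f : [0,1] → ℝⁿ with range Γ such that f([0,t]) has arclength tL for all t ∈ [0,1]; the two such maps are related by reversal (f₂(t) = f₁(1−t)). -/

import Mathlib

/-! The arclength `s t = H¹(γ [0, t])` of an injective curve is continuous, because `H¹` has no
atoms, and strictly increasing, because an arc is at least as long as its chord; hence `γ ∘ s⁻¹`,
rescaled to `[0, 1]`, has constant speed. If `f` and `g` both have constant speed, then `f⁻¹ ∘ g` is
a homeomorphism of `[0, 1]`. When it is increasing, comparing the lengths of the initial arcs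
`g [0, t] = f [0, (f⁻¹ ∘ g) t]` forces it to be the identity; when it is decreasing, the same
argument applies to the reversal of `f`. -/

open Set MeasureTheory ENNReal

/-- `f` is a normalized constant-speed parametrization of the simple rectifiable curve `Γ`. -/
def IsConstantSpeedParam {n : ℕ} (Γ : Set (EuclideanSpace ℝ (Fin n)))
    (f : ℝ → EuclideanSpace ℝ (Fin n)) : Prop :=
  ContinuousOn f (Icc 0 1) ∧ InjOn f (Icc 0 1) ∧ f '' Icc 0 1 = Γ ∧
  ∀ t ∈ Icc (0 : ℝ) 1, μH[1] (f '' Icc 0 t) = ENNReal.ofReal t * μH[1] Γ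

open Filter Topology Function

theorem Set.InjOn.continuousOn_invFunOn_image {X Y : Type*} [TopologicalSpace X] [Nonempty X]
    [TopologicalSpace Y] [T2Space Y] {K : Set X} {F : X → Y} (hi : InjOn F K) (hK : IsCompact K)
    (hc : ContinuousOn F K) : ContinuousOn (invFunOn F K) (F '' K) := by
  refine continuousOn_iff_isClosed.mpr fun C hC => ⟨F '' (K ∩ C), ?_, ?_⟩
  · exact ((hK.inter_right hC).image_of_continuousOn (hc.mono inter_subset_left)).isClosed
  · ext y
    constructor
    · rintro ⟨hyC, x, hx, rfl⟩
      rw [mem_preimage, hi.leftInvOn_invFunOn hx] at hyC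
      exact ⟨⟨x, ⟨hx, hyC⟩, rfl⟩, x, hx, rfl⟩
    · rintro ⟨⟨x, ⟨hx, hxC⟩, rfl⟩, -⟩
      refine ⟨?_, x, hx, rfl⟩
      rwa [mem_preimage, hi.leftInvOn_invFunOn hx]

section MeasureAlongCurve

variable {X : Type*} [TopologicalSpace X] [T2Space X] [MeasurableSpace X] [OpensMeasurableSpace X]
  (μ : Measure X) [NullSingletonClass μ] {γ : ℝ → X} {a b c : ℝ}

theorem measure_image_Icc_add (hab : a ≤ b) (hbc : b ≤ c) (hc : ContinuousOn γ (Icc a c))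
    (hi : InjOn γ (Icc a c)) :
    μ (γ '' Icc a b) + μ (γ '' Icc b c) = μ (γ '' Icc a c) := by
  have hsub₁ : Icc a b ⊆ Icc a c := Icc_subset_Icc le_rfl hbc
  have hsub₂ : Icc b c ⊆ Icc a c := Icc_subset_Icc hab le_rfl
  have hmeas : MeasurableSet (γ '' Icc b c) :=
    (isCompact_Icc.image_of_continuousOn (hc.mono hsub₂)).isClosed.measurableSet
  have hinter : γ '' Icc a b ∩ γ '' Icc b c = {γ b} := by
    rw [← hi.image_inter hsub₁ hsub₂, Icc_inter_Icc, max_eq_right hab, min_eq_left hbc, Icc_self,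
      image_singleton]
  rw [← Icc_union_Icc_eq_Icc hab hbc, image_union, ← measure_union_add_inter _ hmeas, hinter,
    measure_singleton, add_zero]

theorem dist_toReal_measure_image_Icc (hc : ContinuousOn γ (Icc a c)) (hi : InjOn γ (Icc a c))
    (hfin : μ (γ '' Icc a c) ≠ ∞) {s t : ℝ} (hs : s ∈ Icc a c) (ht : t ∈ Icc a c) :
    dist (μ (γ '' Icc a s)).toReal (μ (γ '' Icc a t)).toReal = (μ (γ '' uIcc s t)).toReal := by
  wlog hst : s ≤ t generalizing s t
  · rw [dist_comm, uIcc_comm]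
    exact this ht hs (le_of_not_ge hst)
  have hsub : Icc a t ⊆ Icc a c := Icc_subset_Icc le_rfl ht.2
  have hfin' {u v : ℝ} (h : Icc u v ⊆ Icc a c) : μ (γ '' Icc u v) ≠ ∞ :=
    ne_top_of_le_ne_top hfin (measure_mono (image_mono h))
  rw [uIcc_of_le hst, ← measure_image_Icc_add μ hs.1 hst (hc.mono hsub) (hi.mono hsub),
    ENNReal.toReal_add (hfin' (Icc_subset_Icc le_rfl hs.2)) (hfin' (Icc_subset_Icc hs.1 ht.2)),
    dist_self_add_right, Real.norm_of_nonneg toReal_nonneg]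

theorem continuousOn_toReal_measure_image_Icc (hc : ContinuousOn γ (Icc a c))
    (hi : InjOn γ (Icc a c)) (hfin : μ (γ '' Icc a c) ≠ ∞) :
    ContinuousOn (fun t => (μ (γ '' Icc a t)).toReal) (Icc a c) := by
  rw [Metric.continuousOn_iff]
  intro t₀ ht₀ ε hε
  set K : ℝ → Set ℝ := fun r => Icc a c ∩ Metric.closedBall t₀ r
  have hK : ∀ r, K r ⊆ Icc a c := fun r => inter_subset_left
  have hfinK : ∀ r, μ (γ '' K r) ≠ ∞ := fun r =>
    ne_top_of_le_ne_top hfin (measure_mono (image_mono (hK r)))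
  have hshrink : ⋂ r > (0 : ℝ), K r = {t₀} := by
    refine Subset.antisymm (fun x hx => ?_) (singleton_subset_iff.mpr ?_)
    · rw [← Metric.closedBall_zero, ← Metric.biInter_gt_closedBall]
      exact biInter_mono subset_rfl (fun r _ => inter_subset_right) hx
    · simpa [K, ht₀] using fun r hr => hr.le
  have hlim : Tendsto (fun r => μ (γ '' K r)) (𝓝[>] 0) (𝓝 0) := by
    have h := tendsto_measure_biInter_gt (μ := μ) (s := fun r => γ '' K r) (a := 0)
      (fun r _ => ((isCompact_Icc.inter_right Metric.isClosed_closedBall).image_of_continuousOn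
        (hc.mono (hK r))).isClosed.measurableSet.nullMeasurableSet)
      (fun r r' _ h =>
        image_mono (inter_subset_inter_right _ (Metric.closedBall_subset_closedBall h)))
      ⟨1, one_pos, hfinK 1⟩
    rwa [← InjOn.image_biInter_eq ⟨1, one_pos⟩ (hi.mono (iUnion₂_subset fun r _ => hK r)), hshrink,
      image_singleton, measure_singleton] at h
  obtain ⟨r, hsmall, hr⟩ :=
    ((hlim.eventually (gt_mem_nhds (ofReal_pos.mpr hε))).and self_mem_nhdsWithin).exists
  refine ⟨r, hr, fun t ht hdist => ?_⟩
  have hsub : uIcc t t₀ ⊆ K r := fun x hx => ⟨uIcc_subset_Icc ht ht₀ hx, by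
    rw [Metric.mem_closedBall, Real.dist_eq, abs_sub_comm]
    exact (abs_sub_right_of_mem_uIcc hx).trans ((abs_sub_comm _ _).trans_le hdist.le)⟩
  rw [dist_toReal_measure_image_Icc μ hc hi hfin ht ht₀]
  exact (toReal_mono (hfinK r) (measure_mono (image_mono hsub))).trans_lt
    (toReal_lt_of_lt_ofReal hsmall)

end MeasureAlongCurve

theorem IsPreconnected.edist_le_hausdorffMeasure_one {X : Type*} [MetricSpace X]
    [MeasurableSpace X] [BorelSpace X] {s : Set X} (hs : IsPreconnected s) {x y : X}
    (hx : x ∈ s) (hy : y ∈ s) : edist x y ≤ μH[1] s := by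
  have hlip : LipschitzWith 1 (dist · x) := LipschitzWith.dist_left x
  have hIcc : Icc 0 (dist y x) ⊆ (dist · x) '' s :=
    (hs.image _ hlip.continuous.continuousOn).Icc_subset ⟨x, hx, dist_self x⟩ ⟨y, hy, rfl⟩
  calc edist x y = μH[1] (Icc 0 (dist y x)) := by
        rw [hausdorffMeasure_real, Real.volume_Icc, sub_zero, edist_dist, dist_comm]
    _ ≤ μH[1] ((dist · x) '' s) := measure_mono hIcc
    _ ≤ μH[1] s := by simpa using hlip.hausdorffMeasure_image_le zero_le_one s

instance {X : Type*} [EMetricSpace X] [MeasurableSpace X] [BorelSpace X] :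
    NullSingletonClass (μH[1] : Measure X) :=
  Measure.nullSingletonClass_hausdorff X one_pos

theorem strictMonoOn_hausdorffMeasure_image_Icc {X : Type*} [MetricSpace X] [MeasurableSpace X]
    [BorelSpace X] {γ : ℝ → X} {a c : ℝ} (hc : ContinuousOn γ (Icc a c)) (hi : InjOn γ (Icc a c))
    (hfin : μH[1] (γ '' Icc a c) ≠ ∞) :
    StrictMonoOn (fun t => μH[1] (γ '' Icc a t)) (Icc a c) := by
  intro s hs t ht hst
  dsimp only
  have hsub : Icc a t ⊆ Icc a c := Icc_subset_Icc le_rfl ht.2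
  have hγst : edist (γ s) (γ t) ≤ μH[1] (γ '' Icc s t) :=
    (isPreconnected_Icc.image γ (hc.mono (Icc_subset_Icc hs.1 ht.2))).edist_le_hausdorffMeasure_one
      (mem_image_of_mem γ (left_mem_Icc.mpr hst.le)) (mem_image_of_mem γ (right_mem_Icc.mpr hst.le))
  rw [← measure_image_Icc_add μH[1] hs.1 hst.le (hc.mono hsub) (hi.mono hsub)]
  exact ENNReal.lt_add_right
    (ne_top_of_le_ne_top hfin (measure_mono (image_mono (Icc_subset_Icc le_rfl hs.2))))
    ((edist_pos.mpr (hi.ne hs ht hst.ne)).trans_le hγst).ne'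

section ConstantSpeed

variable {n : ℕ} {Γ : Set (EuclideanSpace ℝ (Fin n))} {f g : ℝ → EuclideanSpace ℝ (Fin n)}

theorem IsConstantSpeedParam.hausdorffMeasure_image_Icc_one (hf : IsConstantSpeedParam Γ f)
    (hfin : μH[1] Γ ≠ ∞) {a : ℝ} (ha : a ∈ Icc (0 : ℝ) 1) :
    μH[1] (f '' Icc a 1) = ENNReal.ofReal (1 - a) * μH[1] Γ := by
  have hadd := measure_image_Icc_add μH[1] ha.1 ha.2 hf.1 hf.2.1
  rw [hf.2.2.1, hf.2.2.2 a ha] at hadd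
  rw [ENNReal.eq_sub_of_add_eq (mul_ne_top ofReal_ne_top hfin) ((add_comm _ _).trans hadd),
    ENNReal.ofReal_sub _ ha.1, ofReal_one, ENNReal.sub_mul fun _ _ => hfin, one_mul]

theorem IsConstantSpeedParam.comp_one_sub (hf : IsConstantSpeedParam Γ f) (hfin : μH[1] Γ ≠ ∞) :
    IsConstantSpeedParam Γ (fun t => f (1 - t)) := by
  have hmaps : MapsTo (fun t : ℝ => 1 - t) (Icc 0 1) (Icc 0 1) := fun t ht =>
    ⟨sub_nonneg.mpr ht.2, sub_le_self 1 ht.1⟩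
  have himg : ∀ t : ℝ, (fun u => f (1 - u)) '' Icc 0 t = f '' Icc (1 - t) 1 := fun t => by
    rw [← image_image f (1 - ·), image_const_sub_Icc, sub_zero]
  refine ⟨hf.1.comp (continuousOn_const.sub continuousOn_id) hmaps,
    hf.2.1.comp (sub_right_injective.injOn) hmaps, ?_, fun t ht => ?_⟩
  · rw [himg, sub_self, hf.2.2.1]
  · rw [himg, hf.hausdorffMeasure_image_Icc_one hfin ⟨sub_nonneg.mpr ht.2, sub_le_self 1 ht.1⟩,
      sub_sub_cancel 1 t]

theorem IsConstantSpeedParam.eqOn_of_eqOn_comp (hf : IsConstantSpeedParam Γ f)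
    (hg : IsConstantSpeedParam Γ g) (hL₀ : μH[1] Γ ≠ 0) (hL : μH[1] Γ ≠ ∞) {φ : ℝ → ℝ}
    (hφc : ContinuousOn φ (Icc 0 1)) (hφm : MonotoneOn φ (Icc 0 1))
    (hφimg : φ '' Icc 0 1 = Icc 0 1) (hgφ : EqOn g (f ∘ φ) (Icc 0 1)) :
    EqOn g f (Icc 0 1) := by
  have hφ0 : φ 0 = 0 := by
    have h := hφc.image_Icc_of_monotoneOn zero_le_one hφm
    rw [hφimg] at h
    exact ((Icc_eq_Icc_iff zero_le_one).mp h).1.symm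
  intro t ht
  have hφt : φ t ∈ Icc (0 : ℝ) 1 := hφimg ▸ mem_image_of_mem φ ht
  have himg : g '' Icc 0 t = f '' Icc 0 (φ t) := calc
    g '' Icc 0 t = f '' (φ '' Icc 0 t) := by
      rw [image_image]
      exact image_congr fun x hx => hgφ ⟨hx.1, hx.2.trans ht.2⟩
    _ = f '' Icc 0 (φ t) := by
      rw [(hφc.mono (Icc_subset_Icc_right ht.2)).image_Icc_of_monotoneOn ht.1
        (hφm.mono (Icc_subset_Icc_right ht.2)), hφ0]
  have hmeas : ENNReal.ofReal (φ t) * μH[1] Γ = ENNReal.ofReal t * μH[1] Γ := by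
    rw [← hg.2.2.2 t ht, ← hf.2.2.2 _ hφt, himg]
  have hφid : φ t = t :=
    (ofReal_eq_ofReal_iff hφt.1 ht.1).mp ((ENNReal.mul_left_inj hL₀ hL).mp hmeas)
  rw [hgφ ht, comp_apply, hφid]

theorem IsConstantSpeedParam.eqOn_or_eqOn_comp_one_sub (hf : IsConstantSpeedParam Γ f)
    (hg : IsConstantSpeedParam Γ g) (hL₀ : μH[1] Γ ≠ 0) (hL : μH[1] Γ ≠ ∞) :
    EqOn g f (Icc 0 1) ∨ EqOn g (fun t => f (1 - t)) (Icc 0 1) := by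
  set φ := invFunOn f (Icc 0 1) ∘ g
  have hgf : MapsTo g (Icc 0 1) (f '' Icc 0 1) := by
    rw [hf.2.2.1, ← hg.2.2.1]
    exact mapsTo_image g _
  have hgφ : EqOn g (f ∘ φ) (Icc 0 1) := fun t ht =>
    ((surjOn_image f _).rightInvOn_invFunOn (hgf ht)).symm
  have hφc : ContinuousOn φ (Icc 0 1) :=
    (hf.2.1.continuousOn_invFunOn_image isCompact_Icc hf.1).comp hg.1 hgf
  have hφi : InjOn φ (Icc 0 1) := fun x hx y hy h => hg.2.1 hx hy <| by
    rw [hgφ hx, hgφ hy, comp_apply, comp_apply, h]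
  have hφimg : φ '' Icc 0 1 = Icc 0 1 := by
    rw [image_comp, hg.2.2.1, ← hf.2.2.1, hf.2.1.leftInvOn_invFunOn.image_image]
  rcases hφc.strictMonoOn_of_injOn_Icc' zero_le_one hφi with hmono | hanti
  · exact .inl (hf.eqOn_of_eqOn_comp hg hL₀ hL hφc hmono.monotoneOn hφimg hgφ)
  · refine .inr ((hf.comp_one_sub hL).eqOn_of_eqOn_comp hg hL₀ hL (φ := fun t => 1 - φ t)
      (continuousOn_const.sub hφc)
      (fun x hx y hy hxy => sub_le_sub_left (hanti.antitoneOn hx hy hxy) 1)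
      ?_ fun t ht => by simp [hgφ ht])
    rw [← image_image (1 - ·) φ, hφimg, image_const_sub_Icc, sub_zero, sub_self]

theorem exists_isConstantSpeedParam {γ : ℝ → EuclideanSpace ℝ (Fin n)}
    (hc : ContinuousOn γ (Icc 0 1)) (hi : InjOn γ (Icc 0 1))
    (hfin : μH[1] (γ '' Icc 0 1) ≠ ∞) (hpos : μH[1] (γ '' Icc 0 1) ≠ 0) :
    ∃ f, IsConstantSpeedParam (γ '' Icc 0 1) f := by
  set L := μH[1] (γ '' Icc 0 1)
  have hLpos : 0 < L.toReal := toReal_pos hpos hfin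
  have hfin' : ∀ t ∈ Icc (0 : ℝ) 1, μH[1] (γ '' Icc 0 t) ≠ ∞ := fun t ht =>
    ne_top_of_le_ne_top hfin (measure_mono (image_mono (Icc_subset_Icc_right ht.2)))
  set σ : ℝ → ℝ := fun t => (μH[1] (γ '' Icc 0 t)).toReal / L.toReal
  have hσc : ContinuousOn σ (Icc 0 1) :=
    (continuousOn_toReal_measure_image_Icc μH[1] hc hi hfin).div_const _
  have hσm : StrictMonoOn σ (Icc 0 1) := fun s hs t ht hst =>
    div_lt_div_of_pos_right (toReal_strict_mono (hfin' t ht)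
      (strictMonoOn_hausdorffMeasure_image_Icc hc hi hfin hs ht hst)) hLpos
  have hσ0 : σ 0 = 0 := by simp [σ]
  have hσimg : ∀ t ∈ Icc (0 : ℝ) 1, σ '' Icc 0 t = Icc 0 (σ t) := fun t ht => by
    rw [(hσc.mono (Icc_subset_Icc_right ht.2)).image_Icc_of_monotoneOn ht.1
      (hσm.monotoneOn.mono (Icc_subset_Icc_right ht.2)), hσ0]
  have hσ1 : σ 1 = 1 := div_self hLpos.ne'
  have hσsurj : SurjOn σ (Icc 0 1) (Icc 0 1) := by
    rw [SurjOn, hσimg 1 (right_mem_Icc.mpr zero_le_one), hσ1]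
  set τ := invFunOn σ (Icc 0 1)
  have hστ : LeftInvOn σ τ (Icc 0 1) := hσsurj.rightInvOn_invFunOn
  have hτmaps : MapsTo τ (Icc 0 1) (Icc 0 1) := hσsurj.mapsTo_invFunOn
  have hτc : ContinuousOn τ (Icc 0 1) := by
    have h := hσm.injOn.continuousOn_invFunOn_image isCompact_Icc hσc
    rwa [hσimg 1 (right_mem_Icc.mpr zero_le_one), hσ1] at h
  have hτimg : ∀ t ∈ Icc (0 : ℝ) 1, τ '' Icc 0 t = Icc 0 (τ t) := fun t ht => by
    have h : Icc 0 t = σ '' Icc 0 (τ t) := by rw [hσimg _ (hτmaps ht), hστ ht]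
    rw [h, hσm.injOn.leftInvOn_invFunOn.image_image' (Icc_subset_Icc_right (hτmaps ht).2)]
  have h1 : (1 : ℝ) ∈ Icc 0 1 := right_mem_Icc.mpr zero_le_one
  have hτ1 : τ 1 = 1 := hσm.injOn (hτmaps h1) h1 (by rw [hστ h1, hσ1])
  refine ⟨γ ∘ τ, hc.comp hτc hτmaps, hi.comp hστ.injOn hτmaps,
    by rw [image_comp, hτimg 1 h1, hτ1], fun t ht => ?_⟩
  calc μH[1] ((γ ∘ τ) '' Icc 0 t) = ENNReal.ofReal (σ (τ t) * L.toReal) := by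
        rw [image_comp, hτimg t ht, div_mul_cancel₀ _ hLpos.ne',
          ofReal_toReal (hfin' _ (hτmaps ht))]
    _ = ENNReal.ofReal t * L := by rw [hστ ht, ofReal_mul ht.1, ofReal_toReal hfin]

end ConstantSpeed

theorem exactly_two_constant_speed_params {n : ℕ}
    (γ : ℝ → EuclideanSpace ℝ (Fin n))
    (hc : ContinuousOn γ (Icc 0 1)) (hi : InjOn γ (Icc 0 1))
    (Γ : Set (EuclideanSpace ℝ (Fin n))) (hΓ : Γ = γ '' Icc 0 1)
    (hfin : μH[1] Γ < ⊤) (hpos : 0 < μH[1] Γ) :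
    ∃ f₁ f₂ : ℝ → EuclideanSpace ℝ (Fin n),
      IsConstantSpeedParam Γ f₁ ∧ IsConstantSpeedParam Γ f₂ ∧
      (∀ t ∈ Icc (0 : ℝ) 1, f₂ t = f₁ (1 - t)) ∧
      ¬ EqOn f₁ f₂ (Icc 0 1) ∧
      ∀ g : ℝ → EuclideanSpace ℝ (Fin n), IsConstantSpeedParam Γ g →
        EqOn g f₁ (Icc 0 1) ∨ EqOn g f₂ (Icc 0 1) := by
  subst hΓ
  obtain ⟨f, hf⟩ := exists_isConstantSpeedParam hc hi hfin.ne hpos.ne'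
  refine ⟨f, fun t => f (1 - t), hf, hf.comp_one_sub hfin.ne, fun t _ => rfl, fun h => ?_,
    fun g hg => hf.eqOn_or_eqOn_comp_one_sub hg hpos.ne' hfin.ne⟩
  have h01 := hf.2.1 (left_mem_Icc.mpr zero_le_one) (right_mem_Icc.mpr zero_le_one)
    (by simpa using h (left_mem_Icc.mpr zero_le_one))
  exact zero_ne_one h01
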